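/- Let Π = (X,U,F,G,g) be the two-phase reach-avoid problem on transition system S = (X,U,F) associated with nonempty sets A₁, A₂ ⊆ X and G₀ : X → [0,∞], with closed-loop performance L. Let (X',U',F') be a transition system satisfying: (i) X' is a cover of X by nonempty subsets of X; (ii) U' ⊆ U; (iii) for x ∈ Ω ∈ X', Ω' ∈ X', u ∈ U': if Ω' ∩ (⋃_{y∈Ω} F(y,u)) ≠ ∅ then Ω' ∈ F'(Ω,u). Let A'ᵢ = {Ω ∈ X' : Ω ⊆ Aᵢ} for i ∈ {1,2}, assume A'₁, A'₂ nonempty, let G₀' : X' → [0,∞] satisfy G₀'(Ω) ≥ sup_{x∈Ω} G₀(x), and let g' : X' × X' × U' → [0,∞] satisfy g(x,x',u) ≤ g'(Ω,Ω',u) whenever x ∈ Ω ∈ X', x' ∈ Ω' ∈ X', u ∈ U'. Let Π' = (X',U',F',G',g') be the two-phase reach-avoid problem associated with A'₁, A'₂, G₀', with value function V'. Let μ₂' be a memoryless controller optimal for the reach-avoid problem Π₂' = (X',U',F',G₂',g') associated with A'₂ and G₀', with closed-loop performance L₂'; let μ₁' be a memoryless controller with single-valued stopping component optimal for the reach-avoid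 problem Π₁' associated with A'₁ and terminal cost L₂'(·,μ₂'). Let Q : X → Set X' be the quantizer (Ω ∈ Q(p) ⟺ p ∈ Ω), and let μ_Q be the controller that applies μ₁'∘Q until the stopping signal of μ₁'∘Q first equals 1 and applies μ₂'∘Q thereafter. Then L(p, μ_Q) ≤ sup{ V'(Ω) : Ω ∈ X', p ∈ Ω } for all p ∈ X. -/

import Mathlib

open scoped ENNReal Classical

namespace TwoPhase

noncomputable section

variable {X U : Type*}

/-- The behaviour of the transition system `(X, U, F)` initialized at `p`:
`x 0 = p` and `x (t+1) ∈ F (x t) (u t)` for all `t`. -/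
def Behaviour (F : X → U → Set X) (p : X) (u : ℕ → U) (x : ℕ → X) : Prop :=
  x 0 = p ∧ ∀ t, x (t + 1) ∈ F (x t) (u t)

/-- A general (history-dependent) controller, encoded as a map depending on the
time `t` and the full signals, required to be strict (nonempty valued) and causal:
its value at time `t` only depends on `x|[0;t]` and `u|[0;t)`. -/
def IsController (μ : ℕ → (ℕ → X) → (ℕ → U) → Set (U × Bool)) : Prop :=
  (∀ t x u, (μ t x u).Nonempty) ∧
    ∀ (t : ℕ) (x x' : ℕ → X) (u u' : ℕ → U),
      (∀ s ≤ t, x s = x' s) → (∀ s < t, u s = u' s) → μ t x u = μ t x' u'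

/-- The history-dependent controller induced by a memoryless controller. -/
def ofMemoryless (μ : X → Set (U × Bool)) : ℕ → (ℕ → X) → (ℕ → U) → Set (U × Bool) :=
  fun t x _ => μ (x t)

/-- The closed-loop behaviour `B_p(μ × S)`. -/
def ClosedLoop (F : X → U → Set X) (μ : ℕ → (ℕ → X) → (ℕ → U) → Set (U × Bool))
    (p : X) (u : ℕ → U) (v : ℕ → Bool) (x : ℕ → X) : Prop :=
  Behaviour F p u x ∧ ∀ t, (u t, v t) ∈ μ t x u

/-- The total cost `J(u,v,x)` associated with running cost `g` and
trajectory cost `G` (where `G T x` is the cost of the finite trajectory `x|[0;T]`):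
if `v` is not identically `0` and `T = min v⁻¹(1)`, it is
`∑_{t<T} g (x t) (x (t+1)) (u t) + G T x`; otherwise it is `∞`. -/
def totalCost (g : X → X → U → ℝ≥0∞) (G : ℕ → (ℕ → X) → ℝ≥0∞)
    (u : ℕ → U) (v : ℕ → Bool) (x : ℕ → X) : ℝ≥0∞ :=
  if h : ∃ t, v t = true then
    (∑ t ∈ Finset.range (Nat.find h), g (x t) (x (t + 1)) (u t)) + G (Nat.find h) x
  else ⊤

/-- The closed-loop performance `L(p, μ)` of the optimal control problem
`(X, U, F, G, g)`. -/
def perf (F : X → U → Set X) (g : X → X → U → ℝ≥0∞) (G : ℕ → (ℕ → X) → ℝ≥0∞)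
    (μ : ℕ → (ℕ → X) → (ℕ → U) → Set (U × Bool)) (p : X) : ℝ≥0∞ :=
  ⨆ (u : ℕ → U) (v : ℕ → Bool) (x : ℕ → X) (_ : ClosedLoop F μ p u v x),
    totalCost g G u v x

/-- The value function `V(p)` of the optimal control problem `(X, U, F, G, g)`. -/
def value (F : X → U → Set X) (g : X → X → U → ℝ≥0∞) (G : ℕ → (ℕ → X) → ℝ≥0∞)
    (p : X) : ℝ≥0∞ :=
  ⨅ (μ : ℕ → (ℕ → X) → (ℕ → U) → Set (U × Bool)) (_ : IsController μ),
    perf F g G μ p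

/-- The (terminal) trajectory cost of the reach-avoid problem associated with `A`
and `G₀`. -/
def reachAvoidCost (A : Set X) (G₀ : X → ℝ≥0∞) : ℕ → (ℕ → X) → ℝ≥0∞ :=
  fun T x => if x T ∈ A then G₀ (x T) else ⊤

/-- The trajectory cost of the two-phase reach-avoid problem associated with
`A₁`, `A₂` and `G₀`. -/
def twoPhaseCost (A₁ A₂ : Set X) (G₀ : X → ℝ≥0∞) : ℕ → (ℕ → X) → ℝ≥0∞ :=
  fun t x => if (∃ s ≤ t, x s ∈ A₁) ∧ x t ∈ A₂ then G₀ (x t) else ⊤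

/-- A trajectory cost which is a terminal cost `G : X → [0,∞]`. -/
def termCost (G : X → ℝ≥0∞) : ℕ → (ℕ → X) → ℝ≥0∞ := fun T x => G (x T)

/-- The stopping component of a memoryless controller is single-valued. -/
def SVStop (μ : X → Set (U × Bool)) : Prop :=
  ∀ q : X, (∀ w ∈ μ q, w.2 = false) ∨ (∀ w ∈ μ q, w.2 = true)

/-- The composed controller `μ` of Proposition 1: it plays `μ₁` as long as the
stopping signal `w` of `μ₁` along `x` satisfies `w s = 0` for all `s ∈ [0;t]`,
and plays `μ₂` afterwards. -/
def composed (μ₁ μ₂ : X → Set (U × Bool)) :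
    ℕ → (ℕ → X) → (ℕ → U) → Set (U × Bool) :=
  fun t x _ =>
    if ∀ s ≤ t, ∀ w ∈ μ₁ (x s), w.2 = false then μ₁ (x t) else μ₂ (x t)

/-- The refined controller `μ' ∘ Q` of a memoryless abstract controller `μ'`,
where `Q` is the quantizer: `(μ' ∘ Q) p = ⋃_{Ω ∈ X', p ∈ Ω} μ' Ω`. -/
def refineCtrl {XA : Set (Set X)} {UA : Set U} (μ' : ↥XA → Set (↥UA × Bool)) :
    X → Set (U × Bool) :=
  fun p => ⋃ (Ω : ↥XA) (_ : p ∈ (Ω : Set X)),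
    (fun w : ↥UA × Bool => ((w.1 : U), w.2)) '' μ' Ω

end

end TwoPhase

/-!
A run of the refined controller `μ_Q` is shadowed cell by cell in the abstraction: its first phase
by a run of `μ₁'`, its second phase by a run of `μ₂'` started in some cell `Θ` of the switching
state, and by (iii) and the bounds on `g'` and `G₀'` the abstract costs dominate the concrete ones.
Gluing the first-phase shadow to `L₂'(Θ, μ₂') ≤ L₁'(Θ, μ₁')` bounds the concrete cost by
`L₁'(Ω₀, μ₁')` for a cell `Ω₀ ∋ p`; if instead the switching cell lies outside `A₁'`, then `μ₁'`
stops there and `L₁'(Ω₀, μ₁') = ∞`. Both `L₂' = V₂' ≤ L₁'` and `L₁' = V₁' ≤ V'` are dynamic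
programming inequalities, proved by showing that a Bellman subsolution bounds the performance of
every controller from below: the adversary steers the run so that the subsolution decreases by at
most the running cost.
-/

namespace TwoPhase

open Function Finset
open scoped NNReal

section

variable {X U : Type*}

abbrev Controller (X U : Type*) := ℕ → (ℕ → X) → (ℕ → U) → Set (U × Bool)

section Cost

variable {g : X → X → U → ℝ≥0∞} {G : ℕ → (ℕ → X) → ℝ≥0∞} {u : ℕ → U} {v : ℕ → Bool}
  {x : ℕ → X}

theorem totalCost_of_forall_false (hv : ∀ t, v t = false) : totalCost g G u v x = ⊤ := by
  simp [totalCost, hv]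

theorem totalCost_of_head_true (hv : v 0 = true) : totalCost g G u v x = G 0 x := by
  have h : ∃ t, v t = true := ⟨0, hv⟩
  simp [totalCost, h, (Nat.find_eq_zero h).2 hv]

theorem totalCost_mono {G' : ℕ → (ℕ → X) → ℝ≥0∞} (h : ∀ T, G T x ≤ G' T x) :
    totalCost g G u v x ≤ totalCost g G' u v x := by
  unfold totalCost; split
  · exact add_le_add le_rfl (h _)
  · exact le_rfl

theorem totalCost_shift (k : ℕ) (hv : ∀ t < k, v t = false) :
    totalCost g G u v x =
      (∑ t ∈ range k, g (x t) (x (t + 1)) (u t)) +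
        totalCost g (fun T _ => G (T + k) x)
          (fun t => u (t + k)) (fun t => v (t + k)) (fun t => x (t + k)) := by
  unfold totalCost
  by_cases h : ∃ t, v t = true
  · have hk : k ≤ Nat.find h := (Nat.le_find_iff h k).2 fun m hm => by simp [hv m hm]
    have h' : ∃ t, v (t + k) = true :=
      ⟨Nat.find h - k, by rw [Nat.sub_add_cancel hk]; exact Nat.find_spec h⟩
    rw [dif_pos h, dif_pos h', ← Nat.find_add (hₘ := h') hk, Nat.add_comm _ k, sum_range_add,
      add_assoc]
    simp only [Nat.add_comm k, Nat.add_right_comm _ 1 k]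
  · have h' : ¬ ∃ t, v (t + k) = true := fun ⟨t, ht⟩ => h ⟨t + k, ht⟩
    rw [dif_neg h, dif_neg h', add_top]

theorem totalCost_reachAvoid_eq_add {A : Set X} {K : X → ℝ≥0∞} (hv : v 0 = false) :
    totalCost g (reachAvoidCost A K) u v x =
      g (x 0) (x 1) (u 0) + totalCost g (reachAvoidCost A K)
        (fun t => u (t + 1)) (fun t => v (t + 1)) (fun t => x (t + 1)) := by
  rw [totalCost_shift 1 fun t ht => by rwa [Nat.lt_one_iff.1 ht], sum_range_one]
  rfl

theorem totalCost_twoPhase_le {A₁ A₂ : Set X} {G₀ : X → ℝ≥0∞} {T : ℕ}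
    (hv : ∀ t < T, v t = false) (hA₁ : x T ∈ A₁) :
    totalCost g (twoPhaseCost A₁ A₂ G₀) u v x ≤
      (∑ t ∈ range T, g (x t) (x (t + 1)) (u t)) + totalCost g (reachAvoidCost A₂ G₀)
        (fun t => u (t + T)) (fun t => v (t + T)) (fun t => x (t + T)) := by
  rw [totalCost_shift T hv]
  refine add_le_add_right (totalCost_mono fun t => ?_) _
  show twoPhaseCost A₁ A₂ G₀ (t + T) x ≤ reachAvoidCost A₂ G₀ t fun t => x (t + T)
  by_cases hA₂ : x (t + T) ∈ A₂
  · rw [twoPhaseCost, reachAvoidCost, if_pos ⟨⟨T, by omega, hA₁⟩, hA₂⟩, if_pos hA₂]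
  · rw [reachAvoidCost, if_neg hA₂]
    exact le_top

end Cost

section Perf

variable {F : X → U → Set X} {g : X → X → U → ℝ≥0∞} {G : ℕ → (ℕ → X) → ℝ≥0∞}
  {μ : Controller X U} {p : X}

theorem le_perf {u : ℕ → U} {v : ℕ → Bool} {x : ℕ → X} (h : ClosedLoop F μ p u v x) :
    totalCost g G u v x ≤ perf F g G μ p :=
  le_iSup_of_le u <| le_iSup_of_le v <| le_iSup_of_le x <| le_iSup_of_le h le_rfl

theorem add_perf_le {a c : ℝ≥0∞} (hrun : ∃ u v x, ClosedLoop F μ p u v x)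
    (h : ∀ u v x, ClosedLoop F μ p u v x → a + totalCost g G u v x ≤ c) :
    a + perf F g G μ p ≤ c := by
  obtain ⟨u₀, v₀, x₀, h₀⟩ := hrun
  have : Nonempty U := ⟨u₀ 0⟩
  have : Nonempty X := ⟨p⟩
  have ha : a ≤ c := le_self_add.trans (h _ _ _ h₀)
  simp only [perf, ENNReal.add_iSup]
  refine iSup_le fun u => iSup_le fun v => iSup_le fun x => ?_
  by_cases hcl : ClosedLoop F μ p u v x
  · simpa [iSup_pos hcl] using h u v x hcl
  · simpa [iSup_neg hcl] using ha

theorem isController_ofMemoryless {μ : X → Set (U × Bool)} (hμ : ∀ q, (μ q).Nonempty) :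
    IsController (ofMemoryless μ) :=
  ⟨fun t x _ => hμ (x t), fun t _ _ _ _ hx _ => by simp only [ofMemoryless, hx t le_rfl]⟩

theorem isController_const (w : U × Bool) :
    IsController (fun _ (_ : ℕ → X) _ => ({w} : Set (U × Bool))) :=
  ⟨fun _ _ _ => ⟨w, rfl⟩, fun _ _ _ _ _ _ _ => rfl⟩

theorem exists_closedLoop_of_successor [Nonempty U] (hμ : IsController μ)
    (next : ℕ → (ℕ → X) → U → X) (hnext : ∀ t y a, next t y a ∈ F (y t) a) (p : X) :
    ∃ u v x, ClosedLoop F μ p u v x ∧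
      ∀ t, ∃ y : ℕ → X, (∀ s ≤ t, y s = x s) ∧ x (t + 1) = next t y (u t) := by
  -- `H t` is the history up to time `t`, padded with junk values beyond it.
  let w : ℕ → (ℕ → X) × (ℕ → U) → U × Bool := fun t h => (hμ.1 t h.1 h.2).some
  let H : ℕ → (ℕ → X) × (ℕ → U) := fun t => Nat.rec ((fun _ => p), fun _ => Classical.arbitrary U)
    (fun t h => (update h.1 (t + 1) (next t h.1 (w t h).1), update h.2 t (w t h).1)) t
  let x : ℕ → X := fun t => (H t).1 t
  let u : ℕ → U := fun t => (w t (H t)).1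
  have hH : ∀ t, (∀ s ≤ t, (H t).1 s = x s) ∧ ∀ s < t, (H t).2 s = u s := by
    intro t
    induction t with
    | zero => exact ⟨fun s hs => by rw [Nat.le_zero.1 hs], fun s hs => absurd hs s.not_lt_zero⟩
    | succ t ih =>
      refine ⟨fun s hs => ?_, fun s hs => ?_⟩
      · rcases hs.lt_or_eq with hs | rfl
        · exact (update_of_ne (by omega) _ _).trans (ih.1 s (by omega))
        · rfl
      · rcases (Nat.lt_succ_iff.1 hs).lt_or_eq with hs | rfl
        · exact (update_of_ne (by omega) _ _).trans (ih.2 s hs)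
        · exact update_self _ _ _
  have hμH : ∀ t, μ t (H t).1 (H t).2 = μ t x u := fun t => hμ.2 t _ _ _ _ (hH t).1 (hH t).2
  refine ⟨u, fun t => (w t (H t)).2, x, ⟨⟨rfl, fun t => ?_⟩, fun t => ?_⟩, fun t => ?_⟩
  · show update (H t).1 (t + 1) _ (t + 1) ∈ _
    rw [update_self, ← (hH t).1 t le_rfl]
    exact hnext _ _ _
  · rw [← hμH]
    exact (hμ.1 t _ _).some_mem
  · exact ⟨(H t).1, (hH t).1, update_self _ _ _⟩

theorem exists_closedLoop [Nonempty U] (hF : ∀ x a, (F x a).Nonempty) (hμ : IsController μ)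
    (p : X) : ∃ u v x, ClosedLoop F μ p u v x :=
  let ⟨u, v, x, hcl, _⟩ := exists_closedLoop_of_successor hμ (fun t y a => (hF (y t) a).some)
    (fun _ _ _ => Set.Nonempty.some_mem _) p
  ⟨u, v, x, hcl⟩

end Perf

section Value

variable {F : X → U → Set X} {g : X → X → U → ℝ≥0∞} {G : ℕ → (ℕ → X) → ℝ≥0∞}

theorem value_le_perf {μ : Controller X U} (hμ : IsController μ) (p : X) :
    value F g G p ≤ perf F g G μ p :=
  iInf₂_le μ hμ

theorem exists_perf_le_value_add [Nonempty U] {ε : ℝ≥0∞} (hε : ε ≠ 0) (p : X) :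
    ∃ σ : Controller X U, IsController σ ∧ perf F g G σ p ≤ value F g G p + ε := by
  by_cases htop : value F g G p = ⊤
  · exact ⟨_, isController_const (Classical.arbitrary (U × Bool)), by simp [htop]⟩
  · obtain ⟨σ, hσ⟩ := iInf_lt_iff.1 (ENNReal.lt_add_right htop hε)
    obtain ⟨hσc, hlt⟩ := iInf_lt_iff.1 hσ
    exact ⟨σ, hσc, hlt.le⟩

theorem value_reachAvoid_le [Nonempty U] {A : Set X} {K : X → ℝ≥0∞} {Θ : X} (hΘ : Θ ∈ A) :
    value F g (reachAvoidCost A K) Θ ≤ K Θ := by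
  refine (value_le_perf (isController_const (Classical.arbitrary U, true)) Θ).trans ?_
  refine iSup_le fun u => iSup_le fun v => iSup_le fun x => iSup_le fun hcl => ?_
  have hv : v 0 = true := (Prod.ext_iff.1 (hcl.2 0)).2
  simp [totalCost_of_head_true hv, reachAvoidCost, hcl.1.1, hΘ]

def prepend (a : U) (σ : X → Controller X U) : Controller X U
  | 0, _, _ => {(a, false)}
  | t + 1, x, u => σ (x 1) t (fun s => x (s + 1)) (fun s => u (s + 1))

theorem isController_prepend (a : U) {σ : X → Controller X U} (hσ : ∀ q, IsController (σ q)) :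
    IsController (prepend a σ) := by
  refine ⟨fun t x u => ?_, fun t x x' u u' hx hu => ?_⟩
  · cases t with
    | zero => exact ⟨_, rfl⟩
    | succ t => exact (hσ _).1 _ _ _
  · cases t with
    | zero => rfl
    | succ t =>
      simp only [prepend, hx 1 (by omega)]
      exact (hσ _).2 t _ _ _ _ (fun s hs => hx (s + 1) (by omega))
        (fun s hs => hu (s + 1) (by omega))

theorem value_reachAvoid_le_iSup [Nonempty U] (A : Set X) (K : X → ℝ≥0∞) (Θ : X) (a : U) :
    value F g (reachAvoidCost A K) Θ ≤
      ⨆ Θ' ∈ F Θ a, g Θ Θ' a + value F g (reachAvoidCost A K) Θ' := by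
  refine ENNReal.le_of_forall_pos_le_add fun ε hε _ => ?_
  choose σ hσ hσle using fun q =>
    exists_perf_le_value_add (F := F) (g := g) (G := reachAvoidCost A K)
      (ENNReal.coe_ne_zero.2 hε.ne') q
  refine (value_le_perf (isController_prepend a hσ) Θ).trans <|
    iSup_le fun u => iSup_le fun v => iSup_le fun x => iSup_le fun hcl => ?_
  obtain ⟨hu0, hv0⟩ : u 0 = a ∧ v 0 = false := Prod.ext_iff.1 (hcl.2 0)
  have hx1 : x 1 ∈ F Θ a := by simpa [hcl.1.1, hu0] using hcl.1.2 0
  have htail : ClosedLoop F (σ (x 1)) (x 1)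
      (fun t => u (t + 1)) (fun t => v (t + 1)) (fun t => x (t + 1)) :=
    ⟨⟨rfl, fun t => hcl.1.2 (t + 1)⟩, fun t => hcl.2 (t + 1)⟩
  rw [totalCost_reachAvoid_eq_add hv0, hcl.1.1, hu0]
  calc g Θ (x 1) a + _
      ≤ g Θ (x 1) a + (value F g (reachAvoidCost A K) (x 1) + ε) :=
        add_le_add_right ((le_perf htail).trans (hσle _)) _
    _ ≤ _ := by
        rw [← add_assoc]
        exact add_le_add_left (le_iSup₂_of_le (f := fun Θ' _ =>
          g Θ Θ' a + value F g (reachAvoidCost A K) Θ') (x 1) hx1 le_rfl) _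

end Value

theorem le_of_forall_nnreal_min_le {a b : ℝ≥0∞} (h : ∀ M : ℝ≥0, min a M ≤ b) : a ≤ b := by
  by_contra hlt
  obtain ⟨M, hM, hMa⟩ := ENNReal.lt_iff_exists_nnreal_btwn.1 (not_le.1 hlt)
  exact (h M).not_gt (by rwa [min_eq_right hMa.le])

theorem exists_min_le_add_min {ι : Type*} {s : Set ι} (hs : s.Nonempty) {a : ℝ≥0∞}
    {f h : ι → ℝ≥0∞} (ha : a ≤ ⨆ i ∈ s, f i + h i) (M : ℝ≥0) {δ : ℝ≥0∞} (hδ : δ ≠ 0) :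
    ∃ i ∈ s, min a M ≤ f i + min (h i) M + δ := by
  by_cases h0 : min a M = 0
  · obtain ⟨i, hi⟩ := hs
    exact ⟨i, hi, by simp [h0]⟩
  have hlt : min a M - δ < ⨆ i ∈ s, f i + h i :=
    (ENNReal.sub_lt_self ((min_le_right _ _).trans_lt ENNReal.coe_lt_top).ne h0 hδ).trans_le
      ((min_le_left _ _).trans ha)
  obtain ⟨i, hi, hlt⟩ := lt_biSup_iff.1 hlt
  refine ⟨i, hi, ?_⟩
  rcases le_total (h i) M with hM | hM
  · rw [min_eq_left hM]
    exact tsub_le_iff_right.1 hlt.le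
  · rw [min_eq_right hM]
    exact (min_le_right _ _).trans (le_add_self.trans le_self_add)

section Potential

variable {F : X → U → Set X} {g : X → X → U → ℝ≥0∞} {G : ℕ → (ℕ → X) → ℝ≥0∞}

/-- `Φ` is truncated at `M` so that the adversary can approach the supremum in the Bellman
inequality within a positive error `δ t` at each step, with `∑ δ t ≤ ε`. -/
theorem le_perf_of_potential [Nonempty U] (hF : ∀ x a, (F x a).Nonempty)
    (Φ : ℕ → (ℕ → X) → ℝ≥0∞) (hΦ : ∀ t x y, (∀ s ≤ t, x s = y s) → Φ t x = Φ t y)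
    (hΦG : ∀ t x, Φ t x ≤ G t x)
    (hΦstep : ∀ t x a,
      Φ t x ≤ ⨆ x' ∈ F (x t) a, g (x t) x' a + Φ (t + 1) (update x (t + 1) x'))
    {μ : Controller X U} (hμ : IsController μ) (p : X) :
    Φ 0 (fun _ => p) ≤ perf F g G μ p := by
  refine le_of_forall_nnreal_min_le fun M => ?_
  refine ENNReal.le_of_forall_pos_le_add fun ε hε _ => ?_
  obtain ⟨δ, hδ, hδε⟩ := ENNReal.exists_pos_sum_of_countable' (ENNReal.coe_ne_zero.2 hε.ne') ℕ
  choose next hnext hnextle using fun t y a =>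
    exists_min_le_add_min (hF (y t) a) (hΦstep t y a) M (hδ t).ne'
  obtain ⟨u, v, x, hcl, hx⟩ := exists_closedLoop_of_successor hμ next hnext p
  have hinv : ∀ T, min (Φ 0 fun _ => p) M ≤ (∑ t ∈ range T, g (x t) (x (t + 1)) (u t)) +
      min (Φ T x) M + ∑ t ∈ range T, δ t := by
    intro T
    induction T with
    | zero => simp [hΦ 0 x (fun _ => p) fun s hs => by rw [Nat.le_zero.1 hs, hcl.1.1]]
    | succ T ih =>
      obtain ⟨y, hy, hxT⟩ := hx T
      have hupd : ∀ s ≤ T + 1, update y (T + 1) (x (T + 1)) s = x s := fun s hs => by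
        rcases Nat.le_succ_iff.1 hs with hs | rfl
        · rw [update_of_ne (by omega), hy s hs]
        · rw [update_self]
      have hstep := hnextle T y (u T)
      rw [← hxT, hΦ T y x hy, hy T le_rfl, hΦ (T + 1) _ x hupd] at hstep
      calc _ ≤ _ := ih
        _ ≤ (∑ t ∈ range T, g (x t) (x (t + 1)) (u t)) +
            (g (x T) (x (T + 1)) (u T) + min (Φ (T + 1) x) M + δ T) +
            ∑ t ∈ range T, δ t := by gcongr
        _ = _ := by rw [sum_range_succ, sum_range_succ]; ring
  have hcost : min (Φ 0 fun _ => p) M ≤ totalCost g G u v x + ε := by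
    by_cases hstop : ∃ t, v t = true
    · rw [totalCost, dif_pos hstop]
      refine (hinv (Nat.find hstop)).trans (add_le_add (add_le_add le_rfl ?_) ?_)
      · exact (min_le_left _ _).trans (hΦG _ _)
      · exact (ENNReal.sum_le_tsum _).trans hδε.le
    · rw [totalCost, dif_neg hstop, top_add]
      exact le_top
  exact hcost.trans (add_le_add_left (le_perf hcl) _)

end Potential

section DynamicProgramming

variable {F : X → U → Set X} {g : X → X → U → ℝ≥0∞}

theorem value_le_perf_reachAvoid [Nonempty U] (hF : ∀ x a, (F x a).Nonempty)
    {A₁ A₂ : Set X} {G₂ K : X → ℝ≥0∞}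
    (hK : ∀ Θ ∈ A₁, value F g (reachAvoidCost A₂ G₂) Θ ≤ K Θ)
    {μ : Controller X U} (hμ : IsController μ) (Θ : X) :
    value F g (reachAvoidCost A₂ G₂) Θ ≤ perf F g (reachAvoidCost A₁ K) μ Θ := by
  refine le_perf_of_potential hF (fun t x => value F g (reachAvoidCost A₂ G₂) (x t))
    (fun t x y h => by rw [h t le_rfl]) (fun t x => ?_) (fun t x a => ?_) hμ Θ
  · unfold reachAvoidCost
    split_ifs with h
    exacts [hK _ h, le_top]
  · simpa only [update_self] using value_reachAvoid_le_iSup A₂ G₂ (x t) a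

theorem exists_update_mem_iff {A : Set X} {x : ℕ → X} {t : ℕ} {x' : X} :
    (∃ s ≤ t + 1, update x (t + 1) x' s ∈ A) ↔ (∃ s ≤ t, x s ∈ A) ∨ x' ∈ A := by
  constructor
  · rintro ⟨s, hs, hA⟩
    rcases Nat.le_succ_iff.1 hs with hs | rfl
    · exact .inl ⟨s, hs, by rwa [update_of_ne (by omega)] at hA⟩
    · exact .inr (by rwa [update_self] at hA)
  · rintro (⟨s, hs, hA⟩ | hA)
    · exact ⟨s, by omega, by rwa [update_of_ne (by omega)]⟩
    · exact ⟨t + 1, le_rfl, by rwa [update_self]⟩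

/-- The potential is the phase-two value once `A₁` has been visited and the phase-one value
before. -/
theorem value_reachAvoid_value_le_value_twoPhase [Nonempty U] (hF : ∀ x a, (F x a).Nonempty)
    (A₁ A₂ : Set X) (G₀ : X → ℝ≥0∞) (Θ : X) :
    value F g (reachAvoidCost A₁ (value F g (reachAvoidCost A₂ G₀))) Θ ≤
      value F g (twoPhaseCost A₁ A₂ G₀) Θ := by
  set V₂ := value F g (reachAvoidCost A₂ G₀)
  set V₁ := value F g (reachAvoidCost A₁ V₂)
  have hV₁ : ∀ y ∈ A₁, V₁ y ≤ V₂ y := fun y hy => value_reachAvoid_le hy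
  let Φ : ℕ → (ℕ → X) → ℝ≥0∞ := fun t x => if ∃ s ≤ t, x s ∈ A₁ then V₂ (x t) else V₁ (x t)
  have hΦ : ∀ t x y, (∀ s ≤ t, x s = y s) → Φ t x = Φ t y := fun t x y h => by
    have hvis : (∃ s ≤ t, x s ∈ A₁) ↔ ∃ s ≤ t, y s ∈ A₁ :=
      exists_congr fun s => and_congr_right fun hs => by rw [h s hs]
    simp only [Φ, hvis, h t le_rfl]
  have hΦG : ∀ t x, Φ t x ≤ twoPhaseCost A₁ A₂ G₀ t x := fun t x => by
    simp only [Φ, twoPhaseCost]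
    split_ifs with hvis hcost hcost
    exacts [value_reachAvoid_le hcost.2, le_top, absurd hcost.1 hvis, le_top]
  have hΦstep : ∀ t x a,
      Φ t x ≤ ⨆ x' ∈ F (x t) a, g (x t) x' a + Φ (t + 1) (update x (t + 1) x') := by
    intro t x a
    simp only [Φ, exists_update_mem_iff, update_self]
    by_cases hvis : ∃ s ≤ t, x s ∈ A₁
    · simpa only [hvis, if_true, true_or] using value_reachAvoid_le_iSup A₂ G₀ (x t) a
    · simp only [hvis, if_false, false_or]
      refine (value_reachAvoid_le_iSup A₁ V₂ (x t) a).trans (iSup₂_mono fun x' _ => ?_)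
      split_ifs with hx'
      exacts [add_le_add_right (hV₁ x' hx') _, le_rfl]
  refine le_iInf₂ fun μ hμ => le_trans ?_ (le_perf_of_potential hF Φ hΦ hΦG hΦstep hμ Θ)
  by_cases hΘ : Θ ∈ A₁ <;> simp [Φ, hΘ, hV₁]

end DynamicProgramming

section Memoryless

variable {F : X → U → Set X} {g : X → X → U → ℝ≥0∞} {A : Set X} {K : X → ℝ≥0∞}
  {μ : X → Set (U × Bool)}

theorem add_perf_reachAvoid_le (hF : ∀ x a, (F x a).Nonempty) (hμ : ∀ q, (μ q).Nonempty)
    {Θ Θ' : X} {a : U} (ha : (a, false) ∈ μ Θ) (hΘ' : Θ' ∈ F Θ a) :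
    g Θ Θ' a + perf F g (reachAvoidCost A K) (ofMemoryless μ) Θ' ≤
      perf F g (reachAvoidCost A K) (ofMemoryless μ) Θ := by
  have : Nonempty U := ⟨a⟩
  refine add_perf_le (exists_closedLoop hF (isController_ofMemoryless hμ) Θ')
    fun u v x hcl => ?_
  have hcons : ClosedLoop F (ofMemoryless μ) Θ (fun t => Stream'.cons a u t)
      (fun t => Stream'.cons false v t) (fun t => Stream'.cons Θ x t) := by
    refine ⟨⟨rfl, fun t => ?_⟩, fun t => ?_⟩
    · cases t with
      | zero => show x 0 ∈ F Θ a; rwa [hcl.1.1]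
      | succ t => exact hcl.1.2 t
    · cases t with
      | zero => exact ha
      | succ t => exact hcl.2 t
  have := le_perf (g := g) (G := reachAvoidCost A K) hcons
  rw [totalCost_reachAvoid_eq_add rfl] at this
  rw [← hcl.1.1]
  exact this

theorem perf_reachAvoid_eq_top_of_stop (hF : ∀ x a, (F x a).Nonempty)
    (hμ : ∀ q, (μ q).Nonempty) {Θ : X} (hstop : ∀ w ∈ μ Θ, w.2 = true) (hΘ : Θ ∉ A) :
    perf F g (reachAvoidCost A K) (ofMemoryless μ) Θ = ⊤ := by
  have : Nonempty U := ⟨(hμ Θ).some.1⟩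
  obtain ⟨u, v, x, hcl⟩ := exists_closedLoop hF (isController_ofMemoryless hμ) Θ
  have hv : v 0 = true := hstop _ (by simpa [ofMemoryless, hcl.1.1] using hcl.2 0)
  refine top_le_iff.1 ((le_perf hcl).trans' ?_)
  simp [totalCost_of_head_true hv, reachAvoidCost, hcl.1.1, hΘ]

end Memoryless

theorem ClosedLoop.composed_cases {F : X → U → Set X} {μ₁ μ₂ : X → Set (U × Bool)} {p : X}
    {u : ℕ → U} {v : ℕ → Bool} {x : ℕ → X} (hcl : ClosedLoop F (composed μ₁ μ₂) p u v x) :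
    (∀ t, (u t, v t) ∈ μ₁ (x t) ∧ v t = false) ∨
      ∃ T, (∀ t < T, (u t, v t) ∈ μ₁ (x t) ∧ v t = false) ∧ (∃ w ∈ μ₁ (x T), w.2 = true) ∧
        ∀ t, T ≤ t → (u t, v t) ∈ μ₂ (x t) := by
  have hfirst : ∀ t, (∀ s ≤ t, ∀ w ∈ μ₁ (x s), w.2 = false) →
      (u t, v t) ∈ μ₁ (x t) ∧ v t = false := fun t ht => by
    have hmem : (u t, v t) ∈ μ₁ (x t) := by simpa only [composed, if_pos ht] using hcl.2 t
    exact ⟨hmem, ht t le_rfl _ hmem⟩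
  by_cases hall : ∀ t, ∀ s ≤ t, ∀ w ∈ μ₁ (x s), w.2 = false
  · exact .inl fun t => hfirst t (hall t)
  have hex := not_forall.1 hall
  have hbefore : ∀ t < Nat.find hex, ∀ s ≤ t, ∀ w ∈ μ₁ (x s), w.2 = false :=
    fun t ht => not_not.1 (Nat.find_min hex ht)
  refine .inr ⟨Nat.find hex, fun t ht => hfirst t (hbefore t ht), ?_, fun t ht => ?_⟩
  · obtain ⟨s, hs, w, hw, hw2⟩ : ∃ s ≤ Nat.find hex, ∃ w ∈ μ₁ (x s), w.2 = true := by
      simpa using Nat.find_spec hex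
    rcases hs.lt_or_eq with hs | rfl
    · simp [hbefore s hs s le_rfl w hw] at hw2
    · exact ⟨w, hw, hw2⟩
  · have hnot : ¬ ∀ s ≤ t, ∀ w ∈ μ₁ (x s), w.2 = false := fun h =>
      Nat.find_spec hex fun s hs => h s (hs.trans ht)
    simpa only [composed, if_neg hnot] using hcl.2 t

section Refinement

variable {XA : Set (Set X)} {UA : Set U} {F : X → U → Set X} {F' : XA → UA → Set XA}
  {g : X → X → U → ℝ≥0∞} {g' : XA → XA → UA → ℝ≥0∞}

/-- Condition (iii) on the abstraction `F'` of `F`. -/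
def IsOverApprox (F : X → U → Set X) (F' : XA → UA → Set XA) : Prop :=
  ∀ (Ω Ω' : XA) (u : UA), ((Ω' : Set X) ∩ ⋃ y ∈ (Ω : Set X), F y u).Nonempty → Ω' ∈ F' Ω u

def IsCostBound (g : X → X → U → ℝ≥0∞) (g' : XA → XA → UA → ℝ≥0∞) : Prop :=
  ∀ (x x' : X) (Ω Ω' : XA) (u : UA), x ∈ (Ω : Set X) → x' ∈ (Ω' : Set X) → g x x' u ≤ g' Ω Ω' u

theorem mem_refineCtrl {μ' : XA → Set (UA × Bool)} {a : U} {b : Bool} {p : X} :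
    (a, b) ∈ refineCtrl μ' p ↔
      ∃ Ω : XA, p ∈ (Ω : Set X) ∧ ∃ w ∈ μ' Ω, (w.1 : U) = a ∧ w.2 = b := by
  simp [refineCtrl, Prod.ext_iff]

theorem exists_stopping_cell {μ' : XA → Set (UA × Bool)} (hsv : SVStop μ') {p : X}
    (h : ∃ w ∈ refineCtrl μ' p, w.2 = true) :
    ∃ Ω : XA, p ∈ (Ω : Set X) ∧ ∀ w ∈ μ' Ω, w.2 = true := by
  obtain ⟨⟨a, b⟩, hw, hb⟩ := h
  obtain ⟨Ω, hp, w, hw, -, hwb⟩ := mem_refineCtrl.1 hw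
  refine ⟨Ω, hp, (hsv Ω).resolve_left fun hfalse => ?_⟩
  simp_all

theorem mem_F'_of_mem
    (hiii : IsOverApprox F F')
    {Ω Ω' : XA} {a : UA} {y y' : X} (hy : y ∈ (Ω : Set X)) (hy' : y' ∈ (Ω' : Set X))
    (h : y' ∈ F y a) : Ω' ∈ F' Ω a :=
  hiii Ω Ω' a ⟨y', hy', Set.mem_biUnion hy h⟩

theorem exists_abstract_closedLoop
    (hiii : IsOverApprox F F')
    {μ' : XA → Set (UA × Bool)} {u : ℕ → U} {v : ℕ → Bool} {x : ℕ → X}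
    (hx : ∀ t, x (t + 1) ∈ F (x t) (u t)) (hμ : ∀ t, (u t, v t) ∈ refineCtrl μ' (x t)) :
    ∃ (Ω : ℕ → XA) (u' : ℕ → UA), ClosedLoop F' (ofMemoryless μ') (Ω 0) u' v Ω ∧
      ∀ t, x t ∈ (Ω t : Set X) ∧ (u' t : U) = u t := by
  choose Ω hxΩ w hw hw₁ hw₂ using fun t => mem_refineCtrl.1 (hμ t)
  refine ⟨Ω, fun t => (w t).1, ⟨⟨rfl, fun t => ?_⟩, fun t => ?_⟩, fun t => ⟨hxΩ t, hw₁ t⟩⟩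
  · exact mem_F'_of_mem hiii (hxΩ t) (hxΩ (t + 1)) ((hw₁ t).symm ▸ hx t)
  · show ((w t).1, v t) ∈ μ' (Ω t)
    rw [← hw₂ t]
    exact hw t

theorem totalCost_reachAvoid_le_of_mem_cells
    (hg' : IsCostBound g g')
    {A : Set X} {A' : Set XA} {G₀ : X → ℝ≥0∞} {K : XA → ℝ≥0∞}
    (hA : ∀ Θ ∈ A', (Θ : Set X) ⊆ A) (hK : ∀ Θ ∈ A', ∀ z ∈ (Θ : Set X), G₀ z ≤ K Θ)
    {u : ℕ → U} {v : ℕ → Bool} {x : ℕ → X} {Ω : ℕ → XA} {u' : ℕ → UA}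
    (hxΩ : ∀ t, x t ∈ (Ω t : Set X) ∧ (u' t : U) = u t) :
    totalCost g (reachAvoidCost A G₀) u v x ≤ totalCost g' (reachAvoidCost A' K) u' v Ω := by
  unfold totalCost
  split_ifs with hstop
  · gcongr with t
    · rw [← (hxΩ t).2]
      exact hg' _ _ _ _ _ (hxΩ t).1 (hxΩ (t + 1)).1
    · have hx := (hxΩ (Nat.find hstop)).1
      by_cases hT : Ω (Nat.find hstop) ∈ A'
      · rw [reachAvoidCost, reachAvoidCost, if_pos (hA _ hT hx), if_pos hT]
        exact hK _ hT _ hx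
      · exact le_top.trans_eq (if_neg hT).symm
  · exact le_rfl

theorem exists_mem_totalCost_le_perf
    (hiii : IsOverApprox F F') (hg' : IsCostBound g g')
    {A : Set X} {A' : Set XA} {G₀ : X → ℝ≥0∞} {K : XA → ℝ≥0∞}
    (hA : ∀ Θ ∈ A', (Θ : Set X) ⊆ A) (hK : ∀ Θ ∈ A', ∀ z ∈ (Θ : Set X), G₀ z ≤ K Θ)
    {μ' : XA → Set (UA × Bool)} {u : ℕ → U} {v : ℕ → Bool} {x : ℕ → X}
    (hx : ∀ t, x (t + 1) ∈ F (x t) (u t)) (hμ : ∀ t, (u t, v t) ∈ refineCtrl μ' (x t)) :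
    ∃ Ω₀ : XA, x 0 ∈ (Ω₀ : Set X) ∧ totalCost g (reachAvoidCost A G₀) u v x ≤
      perf F' g' (reachAvoidCost A' K) (ofMemoryless μ') Ω₀ := by
  obtain ⟨Ω, u', hcl, hxΩ⟩ := exists_abstract_closedLoop hiii hx hμ
  exact ⟨Ω 0, (hxΩ 0).1,
    (totalCost_reachAvoid_le_of_mem_cells hg' hA hK hxΩ).trans (le_perf hcl)⟩

theorem exists_mem_sum_add_perf_le
    (hiii : IsOverApprox F F') (hg' : IsCostBound g g')
    (hF' : ∀ Ω u, (F' Ω u).Nonempty) {μ' : XA → Set (UA × Bool)} (hμ' : ∀ Ω, (μ' Ω).Nonempty)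
    {A' : Set XA} {K : XA → ℝ≥0∞} {u : ℕ → U} {x : ℕ → X} (T : ℕ)
    (hx : ∀ t < T, x (t + 1) ∈ F (x t) (u t))
    (hμ : ∀ t < T, (u t, false) ∈ refineCtrl μ' (x t)) {Θ : XA} (hΘ : x T ∈ (Θ : Set X)) :
    ∃ Ω₀ : XA, x 0 ∈ (Ω₀ : Set X) ∧
      (∑ t ∈ range T, g (x t) (x (t + 1)) (u t)) +
          perf F' g' (reachAvoidCost A' K) (ofMemoryless μ') Θ ≤
        perf F' g' (reachAvoidCost A' K) (ofMemoryless μ') Ω₀ := by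
  induction T generalizing Θ with
  | zero => exact ⟨Θ, hΘ, by simp⟩
  | succ T ih =>
    obtain ⟨Ω, hxΩ, w, hw, hw₁, hw₂⟩ := mem_refineCtrl.1 (hμ T (by omega))
    obtain ⟨Ω₀, hxΩ₀, hle⟩ :=
      ih (fun t ht => hx t (by omega)) (fun t ht => hμ t (by omega)) hxΩ
    have hstep : g (x T) (x (T + 1)) (u T) +
        perf F' g' (reachAvoidCost A' K) (ofMemoryless μ') Θ ≤
        perf F' g' (reachAvoidCost A' K) (ofMemoryless μ') Ω := by
      refine le_trans ?_ (add_perf_reachAvoid_le hF' hμ' (a := w.1) (hw₂ ▸ hw)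
        (mem_F'_of_mem hiii hxΩ hΘ (hw₁.symm ▸ hx T (by omega))))
      rw [← hw₁]
      exact add_le_add_left (hg' _ _ _ _ _ hxΩ hΘ) _
    refine ⟨Ω₀, hxΩ₀, le_trans ?_ hle⟩
    rw [sum_range_succ, add_assoc]
    exact add_le_add_right hstep _

theorem exists_mem_totalCost_twoPhase_le_perf
    (hiii : IsOverApprox F F') (hg' : IsCostBound g g')
    (hF' : ∀ Ω u, (F' Ω u).Nonempty)
    {A₁ A₂ : Set X} {A₁' A₂' : Set XA} {G₀ : X → ℝ≥0∞} {G₀' K : XA → ℝ≥0∞}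
    (hA₁ : ∀ Θ ∈ A₁', (Θ : Set X) ⊆ A₁) (hA₂ : ∀ Θ ∈ A₂', (Θ : Set X) ⊆ A₂)
    (hG₀ : ∀ Θ ∈ A₂', ∀ z ∈ (Θ : Set X), G₀ z ≤ G₀' Θ)
    {μ₁' μ₂' : XA → Set (UA × Bool)} (hμ₁' : ∀ Ω, (μ₁' Ω).Nonempty) (hsv : SVStop μ₁')
    (h₂₁ : ∀ Θ, perf F' g' (reachAvoidCost A₂' G₀') (ofMemoryless μ₂') Θ ≤
      perf F' g' (reachAvoidCost A₁' K) (ofMemoryless μ₁') Θ)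
    {p : X} {u : ℕ → U} {v : ℕ → Bool} {x : ℕ → X}
    (hcl : ClosedLoop F (composed (refineCtrl μ₁') (refineCtrl μ₂')) p u v x) :
    ∃ Ω₀ : XA, p ∈ (Ω₀ : Set X) ∧ totalCost g (twoPhaseCost A₁ A₂ G₀) u v x ≤
      perf F' g' (reachAvoidCost A₁' K) (ofMemoryless μ₁') Ω₀ := by
  obtain ⟨hx₀, hx⟩ := hcl.1
  subst hx₀
  rcases hcl.composed_cases with hphase₁ | ⟨T, hpre, hstop, hpost⟩
  · obtain ⟨Ω, u', hcl', hxΩ⟩ := exists_abstract_closedLoop hiii hx fun t => (hphase₁ t).1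
    have hv : ∀ t, v t = false := fun t => (hphase₁ t).2
    refine ⟨Ω 0, (hxΩ 0).1, ?_⟩
    rw [totalCost_of_forall_false hv, ← totalCost_of_forall_false hv]
    exact le_perf hcl'
  have hchain := fun (Θ : XA) (hΘ : x T ∈ (Θ : Set X)) =>
    exists_mem_sum_add_perf_le (g := g) (A' := A₁') (K := K) hiii hg' hF' hμ₁' T
      (fun t _ => hx t) (fun t ht => (hpre t ht).2 ▸ (hpre t ht).1) hΘ
  obtain ⟨Ωs, hxΩs, hΩs⟩ := exists_stopping_cell hsv hstop
  by_cases hΩsA : Ωs ∈ A₁'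
  · obtain ⟨Θ, hxΘ, htail⟩ := exists_mem_totalCost_le_perf (g := g) (μ' := μ₂') hiii hg' hA₂ hG₀
      (x := fun t => x (t + T)) (fun t => by rw [Nat.add_right_comm]; exact hx (t + T))
      (fun t => hpost (t + T) (by omega))
    obtain ⟨Ω₀, hxΩ₀, hle⟩ := hchain Θ (by simpa using hxΘ)
    refine ⟨Ω₀, hxΩ₀, le_trans ?_ hle⟩
    exact (totalCost_twoPhase_le (fun t ht => (hpre t ht).2) (hA₁ _ hΩsA hxΩs)).trans
      (add_le_add_right (htail.trans (h₂₁ Θ)) _)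
  · obtain ⟨Ω₀, hxΩ₀, hle⟩ := hchain Ωs hxΩs
    rw [perf_reachAvoid_eq_top_of_stop hF' hμ₁' hΩs hΩsA, add_top, top_le_iff] at hle
    exact ⟨Ω₀, hxΩ₀, hle ▸ le_top⟩

end Refinement

end

theorem approx_solution_refinement_general
    {X U : Type*}
    (F : X → U → Set X)
    (g : X → X → U → ℝ≥0∞) (G₀ : X → ℝ≥0∞)
    (A₁ A₂ : Set X)
    (XA : Set (Set X)) (UA : Set U)
    (F' : ↥XA → ↥UA → Set ↥XA) (hF' : ∀ Ω u, (F' Ω u).Nonempty)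
    (hiii : ∀ (Ω Ω' : ↥XA) (u : ↥UA),
      ((Ω' : Set X) ∩ ⋃ y ∈ (Ω : Set X), F y u).Nonempty → Ω' ∈ F' Ω u)
    (A₁' A₂' : Set ↥XA)
    (hA₁' : A₁' = {Ω : ↥XA | (Ω : Set X) ⊆ A₁})
    (hA₂' : A₂' = {Ω : ↥XA | (Ω : Set X) ⊆ A₂})
    (G₀' : ↥XA → ℝ≥0∞) (hG₀' : ∀ Ω : ↥XA, (⨆ x ∈ (Ω : Set X), G₀ x) ≤ G₀' Ω)
    (g' : ↥XA → ↥XA → ↥UA → ℝ≥0∞)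
    (hg' : ∀ (x x' : X) (Ω Ω' : ↥XA) (u : ↥UA),
      x ∈ (Ω : Set X) → x' ∈ (Ω' : Set X) → g x x' u ≤ g' Ω Ω' u)
    (μ₂' : ↥XA → Set (↥UA × Bool))
    (hopt₂ : ∀ Ω, perf F' g' (reachAvoidCost A₂' G₀') (ofMemoryless μ₂') Ω =
      value F' g' (reachAvoidCost A₂' G₀') Ω)
    (μ₁' : ↥XA → Set (↥UA × Bool)) (hμ₁' : ∀ Ω, (μ₁' Ω).Nonempty)
    (hsv : SVStop μ₁')
    (hopt₁ : ∀ Ω, perf F' g'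
        (reachAvoidCost A₁'
          (fun Θ => perf F' g' (reachAvoidCost A₂' G₀') (ofMemoryless μ₂') Θ))
        (ofMemoryless μ₁') Ω =
      value F' g'
        (reachAvoidCost A₁'
          (fun Θ => perf F' g' (reachAvoidCost A₂' G₀') (ofMemoryless μ₂') Θ)) Ω)
    (p : X) :
    perf F g (twoPhaseCost A₁ A₂ G₀)
        (composed (refineCtrl μ₁') (refineCtrl μ₂')) p ≤
      ⨆ (Ω : ↥XA) (_ : p ∈ (Ω : Set X)),
        value F' g' (twoPhaseCost A₁' A₂' G₀') Ω := by
  have hL₂ : perf F' g' (reachAvoidCost A₂' G₀') (ofMemoryless μ₂') =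
      value F' g' (reachAvoidCost A₂' G₀') := funext hopt₂
  simp only [hL₂] at hopt₁
  have h₂₁ : ∀ Θ, perf F' g' (reachAvoidCost A₂' G₀') (ofMemoryless μ₂') Θ ≤
      perf F' g' (reachAvoidCost A₁' (value F' g' (reachAvoidCost A₂' G₀')))
        (ofMemoryless μ₁') Θ := fun Θ =>
    have : Nonempty UA := ⟨(hμ₁' Θ).some.1⟩
    (hopt₂ Θ).trans_le <|
      value_le_perf_reachAvoid hF' (fun _ _ => le_rfl) (isController_ofMemoryless hμ₁') Θ
  refine iSup_le fun u => iSup_le fun v => iSup_le fun x => iSup_le fun hcl => ?_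
  obtain ⟨Ω₀, hpΩ₀, hcost⟩ := exists_mem_totalCost_twoPhase_le_perf hiii hg' hF'
    (A₁ := A₁) (A₂ := A₂) (G₀ := G₀) (by simp [hA₁']) (by simp [hA₂'])
    (fun Θ _ z hz => (le_iSup₂ (f := fun x _ => G₀ x) z hz).trans (hG₀' Θ)) hμ₁' hsv h₂₁ hcl
  have : Nonempty UA := ⟨(hμ₁' Ω₀).some.1⟩
  calc _ ≤ _ := hcost
    _ = _ := hopt₁ Ω₀
    _ ≤ value F' g' (twoPhaseCost A₁' A₂' G₀') Ω₀ :=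
      value_reachAvoid_value_le_value_twoPhase hF' A₁' A₂' G₀' Ω₀
    _ ≤ _ := le_iSup₂_of_le (f := fun (Ω : XA) (_ : p ∈ (Ω : Set X)) =>
      value F' g' (twoPhaseCost A₁' A₂' G₀') Ω) Ω₀ hpΩ₀ le_rfl

/-- Theorem 3 of the paper. Let `Π` be the two-phase
reach-avoid problem associated with `A₁`, `A₂`, `G₀` on `(X,U,F)`, and let
`(X',U',F')` be an abstraction satisfying (i)-(iii).  With
`A'ᵢ = {Ω ∈ X' | Ω ⊆ Aᵢ}` nonempty, `G₀'(Ω) ≥ sup_{x∈Ω} G₀ x`,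
`g x x' u ≤ g' Ω Ω' u`, let `Π'` be the abstract two-phase reach-avoid problem
with value function `V'`, let `μ₂'` be memoryless optimal for the abstract
reach-avoid problem `Π₂'` associated with `A'₂`, `G₀'`, and `μ₁'` memoryless
with single-valued stopping component optimal for the abstract reach-avoid
problem `Π₁'` associated with `A'₁` and terminal cost `L₂'(·,μ₂')`.  Then the
refined composed controller `μ_Q` satisfies
`L(p, μ_Q) ≤ sup { V'(Ω) | p ∈ Ω }` for all `p ∈ X`. -/
theorem approx_solution_refinement
    {X U : Type*} [Nonempty X] [Nonempty U]
    (F : X → U → Set X) (hF : ∀ x u, (F x u).Nonempty)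
    (g : X → X → U → ℝ≥0∞) (G₀ : X → ℝ≥0∞)
    (A₁ A₂ : Set X) (hA₁ : A₁.Nonempty) (hA₂ : A₂.Nonempty)
    (XA : Set (Set X)) (UA : Set U)
    (hcover : ∀ p : X, ∃ Ω ∈ XA, p ∈ Ω) (hΩne : ∀ Ω ∈ XA, Ω.Nonempty)
    (F' : ↥XA → ↥UA → Set ↥XA) (hF' : ∀ Ω u, (F' Ω u).Nonempty)
    (hiii : ∀ (Ω Ω' : ↥XA) (u : ↥UA),
      ((Ω' : Set X) ∩ ⋃ y ∈ (Ω : Set X), F y u).Nonempty → Ω' ∈ F' Ω u)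
    (A₁' A₂' : Set ↥XA)
    (hA₁' : A₁' = {Ω : ↥XA | (Ω : Set X) ⊆ A₁}) (hA₁'ne : A₁'.Nonempty)
    (hA₂' : A₂' = {Ω : ↥XA | (Ω : Set X) ⊆ A₂}) (hA₂'ne : A₂'.Nonempty)
    (G₀' : ↥XA → ℝ≥0∞) (hG₀' : ∀ Ω : ↥XA, (⨆ x ∈ (Ω : Set X), G₀ x) ≤ G₀' Ω)
    (g' : ↥XA → ↥XA → ↥UA → ℝ≥0∞)
    (hg' : ∀ (x x' : X) (Ω Ω' : ↥XA) (u : ↥UA),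
      x ∈ (Ω : Set X) → x' ∈ (Ω' : Set X) → g x x' u ≤ g' Ω Ω' u)
    (μ₂' : ↥XA → Set (↥UA × Bool)) (hμ₂' : ∀ Ω, (μ₂' Ω).Nonempty)
    (hopt₂ : ∀ Ω, perf F' g' (reachAvoidCost A₂' G₀') (ofMemoryless μ₂') Ω =
      value F' g' (reachAvoidCost A₂' G₀') Ω)
    (μ₁' : ↥XA → Set (↥UA × Bool)) (hμ₁' : ∀ Ω, (μ₁' Ω).Nonempty)
    (hsv : SVStop μ₁')
    (hopt₁ : ∀ Ω, perf F' g'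
        (reachAvoidCost A₁'
          (fun Θ => perf F' g' (reachAvoidCost A₂' G₀') (ofMemoryless μ₂') Θ))
        (ofMemoryless μ₁') Ω =
      value F' g'
        (reachAvoidCost A₁'
          (fun Θ => perf F' g' (reachAvoidCost A₂' G₀') (ofMemoryless μ₂') Θ)) Ω)
    (p : X) :
    perf F g (twoPhaseCost A₁ A₂ G₀)
        (composed (refineCtrl μ₁') (refineCtrl μ₂')) p ≤
      ⨆ (Ω : ↥XA) (_ : p ∈ (Ω : Set X)),
        value F' g' (twoPhaseCost A₁' A₂' G₀') Ω :=
  approx_solution_refinement_general F g G₀ A₁ A₂ XA UA F' hF' hiii A₁' A₂' hA₁' hA₂' G₀' hG₀' g'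
    hg' μ₂' hopt₂ μ₁' hμ₁' hsv hopt₁ p

end TwoPhase
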